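/- arXiv:1108.2192 — 3 statements merged into one kernel-verified Lean document; each statement's English description precedes it below -/
import Mathlib

section
/- Let b ∈ ℝ with b ≠ 0, and let θ : ℝ → ℝ be a differentiable function satisfying 3θ'(r) = b·sin(3θ(r)) for all r and 0 < θ(0) < π/3. Then there exists a constant c > 0 such that θ(r) = (2/3)·arctan(c·e^{b r}) for all r ∈ ℝ. -/
/-!
Put `φ = 3θ`, so that `φ' = b sin φ`. The right-hand side is `|b|`-Lipschitz, so solutions are
determined by their initial value. Since `sin (2 arctan x) = 2x / (1 + x²)`, the curve
`2 arctan (c e^{br})` is a solution, and for `φ(0) ∈ (-π, π)` it takes the value `φ(0)` at `0` when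
`c = tan (φ(0) / 2)`; this `c` is positive exactly when `φ(0) ∈ (0, π)`.
-/

open Real

theorem Real.sin_two_mul_arctan (x : ℝ) : sin (2 * arctan x) = 2 * x / (1 + x ^ 2) := by
  have hsq : √(1 + x ^ 2) ^ 2 = 1 + x ^ 2 := Real.sq_sqrt (by positivity)
  rw [sin_two_mul, sin_arctan, cos_arctan]
  field_simp
  rw [hsq]

theorem hasDerivAt_two_mul_arctan_mul_exp (b c r : ℝ) :
    HasDerivAt (fun r => 2 * arctan (c * exp (b * r)))
      (b * sin (2 * arctan (c * exp (b * r)))) r := by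
  have hexp : HasDerivAt (fun r => c * exp (b * r)) (c * exp (b * r) * b) r :=
    (((hasDerivAt_id' r).const_mul b).exp.const_mul c).congr_deriv (by ring)
  refine (hexp.arctan.const_mul 2).congr_deriv ?_
  rw [sin_two_mul_arctan]
  ring

theorem eq_two_mul_arctan_of_hasDerivAt_sin {b : ℝ} {φ : ℝ → ℝ}
    (hφ : ∀ r, HasDerivAt φ (b * sin (φ r)) r) (hφ₀ : φ 0 ∈ Set.Ioo (-π) π) :
    φ = fun r => 2 * arctan (tan (φ 0 / 2) * exp (b * r)) := by
  have hlip : LipschitzWith (‖b‖₊ * 1) fun x => b * sin x :=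
    (lipschitzWith_smul b).comp lipschitzWith_sin
  refine ODE_solution_unique_univ (v := fun _ x => b * sin x) (s := fun _ => Set.univ) (t₀ := 0)
    (fun _ => hlip.lipschitzOnWith) (fun r => ⟨hφ r, trivial⟩)
    (fun r => ⟨hasDerivAt_two_mul_arctan_mul_exp b _ r, trivial⟩) ?_
  obtain ⟨hlo, hhi⟩ := hφ₀
  rw [mul_zero, exp_zero, mul_one, arctan_tan (by linarith) (by linarith)]
  ring

theorem cy_soliton_phase_classification_general
    (b : ℝ) (θ : ℝ → ℝ)
    (hθ : Differentiable ℝ θ)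
    (hode : ∀ r : ℝ, 3 * deriv θ r = b * Real.sin (3 * θ r))
    (h0 : 0 < θ 0) (h1 : θ 0 < Real.pi / 3) :
    ∃ c : ℝ, 0 < c ∧ ∀ r : ℝ, θ r = (2 / 3) * Real.arctan (c * Real.exp (b * r)) := by
  have hφ : ∀ r, HasDerivAt (fun r => 3 * θ r) (b * sin (3 * θ r)) r := fun r =>
    hode r ▸ (hθ r).hasDerivAt.const_mul 3
  have hsol := eq_two_mul_arctan_of_hasDerivAt_sin hφ ⟨by linarith [pi_pos], by linarith⟩
  refine ⟨tan (3 * θ 0 / 2), tan_pos_of_pos_of_lt_pi_div_two (by linarith) (by linarith), ?_⟩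
  intro r
  have hr := congrFun hsol r
  linarith

/-- Classification of nonconstant soliton phase functions: every solution of
`3θ' = b sin 3θ` (`b ≠ 0`) with initial value strictly between the equilibria
`0` and `π/3` has the explicit arctan-exponential form. -/
theorem cy_soliton_phase_classification
    (b : ℝ) (hb : b ≠ 0) (θ : ℝ → ℝ)
    (hθ : Differentiable ℝ θ)
    (hode : ∀ r : ℝ, 3 * deriv θ r = b * Real.sin (3 * θ r))
    (h0 : 0 < θ 0) (h1 : θ 0 < Real.pi / 3) :
    ∃ c : ℝ, 0 < c ∧ ∀ r : ℝ, θ r = (2 / 3) * Real.arctan (c * Real.exp (b * r)) :=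
  cy_soliton_phase_classification_general b θ hθ hode h0 h1
end

section
/- Let J ⊆ ℝ be an open interval and let G, h, θ : ℝ × J → ℝ be C² functions with G > 0 and h > 0. Suppose for all (r,t): ∂h/∂r = G·cos(3θ) and ∂h/∂t = (1/(G h³))·∂/∂r( h³ cos(3θ) ) − 3/h. Then for all (r,t): ∂/∂t ( G h³ cos(3θ) ) = ∂/∂r ( (∂/∂r (h³ cos 3θ))/G − 3 h² ). -/
/-!
Both sides are the mixed second partials of `h⁴/4`: by the coclosed condition its `r`-derivative
is `G h³ cos 3θ`, and `h³` times the evolution equation for `h` says that its `t`-derivative is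
`(∂ᵣ(h³ cos 3θ))/G - 3h²`. Schwarz's theorem finishes the proof.
-/

open Filter Topology

section Slices

variable {E : Type*} [NormedAddCommGroup E] [NormedSpace ℝ E]

theorem HasFDerivAt.hasDerivAt_fst_slice {f : ℝ × ℝ → E} {f' : ℝ × ℝ →L[ℝ] E} {x y : ℝ}
    (hf : HasFDerivAt f f' (x, y)) : HasDerivAt (fun ξ => f (ξ, y)) (f' (1, 0)) x :=
  hf.comp_hasDerivAt x ((hasDerivAt_id x).prodMk (hasDerivAt_const x y))

theorem HasFDerivAt.hasDerivAt_snd_slice {f : ℝ × ℝ → E} {f' : ℝ × ℝ →L[ℝ] E} {x y : ℝ}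
    (hf : HasFDerivAt f f' (x, y)) : HasDerivAt (fun η => f (x, η)) (f' (0, 1)) y :=
  hf.comp_hasDerivAt y ((hasDerivAt_const y x).prodMk (hasDerivAt_id y))

theorem ContDiffOn.deriv_slice_comm {F : ℝ × ℝ → E} {U : Set (ℝ × ℝ)}
    (hF : ContDiffOn ℝ 2 F U) (hU : IsOpen U) {P Q : ℝ → ℝ → E}
    (hP : ∀ ξ η, (ξ, η) ∈ U → HasDerivAt (fun ξ' => F (ξ', η)) (P ξ η) ξ)
    (hQ : ∀ ξ η, (ξ, η) ∈ U → HasDerivAt (fun η' => F (ξ, η')) (Q ξ η) η)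
    {x y : ℝ} (hxy : (x, y) ∈ U) :
    deriv (fun η => P x η) y = deriv (fun ξ => Q ξ y) x := by
  have hF1 : ∀ q ∈ U, HasFDerivAt F (fderiv ℝ F q) q := fun q hq =>
    ((hF.contDiffAt (hU.mem_nhds hq)).differentiableAt (by norm_num)).hasFDerivAt
  have hFxy := hF.contDiffAt (hU.mem_nhds hxy)
  set F'' := fderiv ℝ (fderiv ℝ F) (x, y)
  have hF2 : HasFDerivAt (fderiv ℝ F) F'' (x, y) :=
    ((hFxy.fderiv_right (m := 1) (by norm_num)).differentiableAt (by norm_num)).hasFDerivAt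
  have hP_eq : (fun η => P x η) =ᶠ[𝓝 y] fun η => fderiv ℝ F (x, η) (1, 0) := by
    have : ∀ᶠ η in 𝓝 y, (x, η) ∈ U :=
      (continuous_const.prodMk continuous_id).continuousAt.preimage_mem_nhds (hU.mem_nhds hxy)
    filter_upwards [this] with η hη using (hP x η hη).unique (hF1 _ hη).hasDerivAt_fst_slice
  have hQ_eq : (fun ξ => Q ξ y) =ᶠ[𝓝 x] fun ξ => fderiv ℝ F (ξ, y) (0, 1) := by
    have : ∀ᶠ ξ in 𝓝 x, (ξ, y) ∈ U :=
      (continuous_id.prodMk continuous_const).continuousAt.preimage_mem_nhds (hU.mem_nhds hxy)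
    filter_upwards [this] with ξ hξ using (hQ ξ y hξ).unique (hF1 _ hξ).hasDerivAt_snd_slice
  have hP' : HasDerivAt (fun η => fderiv ℝ F (x, η) (1, 0)) (F'' (0, 1) (1, 0)) y :=
    (ContinuousLinearMap.apply ℝ E ((1 : ℝ), (0 : ℝ))).hasFDerivAt.comp_hasDerivAt y
      hF2.hasDerivAt_snd_slice
  have hQ' : HasDerivAt (fun ξ => fderiv ℝ F (ξ, y) (0, 1)) (F'' (1, 0) (0, 1)) x :=
    (ContinuousLinearMap.apply ℝ E ((0 : ℝ), (1 : ℝ))).hasFDerivAt.comp_hasDerivAt x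
      hF2.hasDerivAt_fst_slice
  rw [hP_eq.deriv_eq, hQ_eq.deriv_eq, hP'.deriv, hQ'.deriv]
  exact hFxy.isSymmSndFDerivAt (by simp) _ _

end Slices

theorem HasDerivAt.pow_four_div_four {u : ℝ → ℝ} {u' x : ℝ} (hu : HasDerivAt u u' x) :
    HasDerivAt (fun ξ => u ξ ^ 4 / 4) (u x ^ 3 * u') x :=
  ((hu.fun_pow 4).div_const 4).congr_deriv (by norm_num; ring)

theorem nk_coflow_real_part_redundant_general
    (a b : ℝ) (G h θ : ℝ → ℝ → ℝ)
    (J : Set ℝ) (hJ : J = Set.Ioo a b)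
    (hhsmooth : ContDiffOn ℝ 2 (fun p : ℝ × ℝ => h p.1 p.2) (Set.univ ×ˢ J))
    (hhpos : ∀ r : ℝ, ∀ t ∈ J, 0 < h r t)
    (hi : ∀ r : ℝ, ∀ t ∈ J,
      deriv (fun ρ : ℝ => h ρ t) r = G r t * Real.cos (3 * θ r t))
    (hii : ∀ r : ℝ, ∀ t ∈ J,
      deriv (fun s : ℝ => h r s) t
        = (1 / (G r t * (h r t) ^ 3))
            * deriv (fun ρ : ℝ => (h ρ t) ^ 3 * Real.cos (3 * θ ρ t)) r
          - 3 / h r t) :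
    ∀ r : ℝ, ∀ t ∈ J,
      deriv (fun s : ℝ => G r s * (h r s) ^ 3 * Real.cos (3 * θ r s)) t
        = deriv (fun ρ : ℝ =>
            deriv (fun σ : ℝ => (h σ t) ^ 3 * Real.cos (3 * θ σ t)) ρ / G ρ t
              - 3 * (h ρ t) ^ 2) r := by
  intro r t ht
  have hU : IsOpen (Set.univ ×ˢ J : Set (ℝ × ℝ)) := isOpen_univ.prod (hJ ▸ isOpen_Ioo)
  have hh : ∀ q ∈ Set.univ ×ˢ J, HasFDerivAt (fun p : ℝ × ℝ => h p.1 p.2)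
      (fderiv ℝ (fun p : ℝ × ℝ => h p.1 p.2) q) q := fun q hq =>
    ((hhsmooth.contDiffAt (hU.mem_nhds hq)).differentiableAt (by norm_num)).hasFDerivAt
  refine ((hhsmooth.pow 4).div_const 4).deriv_slice_comm hU
    (P := fun ρ s => G ρ s * h ρ s ^ 3 * Real.cos (3 * θ ρ s))
    (Q := fun ρ s => deriv (fun σ => h σ s ^ 3 * Real.cos (3 * θ σ s)) ρ / G ρ s - 3 * h ρ s ^ 2)
    (fun ρ s hs => ?_) (fun ρ s hs => ?_) ⟨trivial, ht⟩
  · have hr := (hh _ hs).hasDerivAt_fst_slice.differentiableAt.hasDerivAt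
    rw [hi ρ s hs.2] at hr
    exact hr.pow_four_div_four.congr_deriv (by ring)
  · have hts := (hh _ hs).hasDerivAt_snd_slice.differentiableAt.hasDerivAt
    rw [hii ρ s hs.2] at hts
    have hne : h ρ s ≠ 0 := (hhpos ρ s hs.2).ne'
    exact hts.pow_four_div_four.congr_deriv (by field_simp)

/-- Redundancy in the derivation of the nearly Kähler coflow equations: given
the coclosed condition `∂ᵣh = G cos 3θ` and the `ω²/2`-component evolution
equation for `h`, the real part of the complex evolution equation
`∂ₜ(G h³ cos 3θ) = ∂ᵣ((∂ᵣ(h³ cos 3θ))/G - 3h²)` follows. -/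
theorem nk_coflow_real_part_redundant
    (a b : ℝ) (G h θ : ℝ → ℝ → ℝ)
    (J : Set ℝ) (hJ : J = Set.Ioo a b)
    (hGsmooth : ContDiffOn ℝ 2 (fun p : ℝ × ℝ => G p.1 p.2) (Set.univ ×ˢ J))
    (hhsmooth : ContDiffOn ℝ 2 (fun p : ℝ × ℝ => h p.1 p.2) (Set.univ ×ˢ J))
    (hθsmooth : ContDiffOn ℝ 2 (fun p : ℝ × ℝ => θ p.1 p.2) (Set.univ ×ˢ J))
    (hGpos : ∀ r : ℝ, ∀ t ∈ J, 0 < G r t)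
    (hhpos : ∀ r : ℝ, ∀ t ∈ J, 0 < h r t)
    (hi : ∀ r : ℝ, ∀ t ∈ J,
      deriv (fun ρ : ℝ => h ρ t) r = G r t * Real.cos (3 * θ r t))
    (hii : ∀ r : ℝ, ∀ t ∈ J,
      deriv (fun s : ℝ => h r s) t
        = (1 / (G r t * (h r t) ^ 3))
            * deriv (fun ρ : ℝ => (h ρ t) ^ 3 * Real.cos (3 * θ ρ t)) r
          - 3 / h r t) :
    ∀ r : ℝ, ∀ t ∈ J,
      deriv (fun s : ℝ => G r s * (h r s) ^ 3 * Real.cos (3 * θ r s)) t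
        = deriv (fun ρ : ℝ =>
            deriv (fun σ : ℝ => (h σ t) ^ 3 * Real.cos (3 * θ σ t)) ρ / G ρ t
              - 3 * (h ρ t) ^ 2) r :=
  nk_coflow_real_part_redundant_general a b G h θ J hJ hhsmooth hhpos hi hii
end

section
/- Let I ⊆ ℝ be an open interval, λ ∈ ℝ, and let h : I → ℝ be three times differentiable with h > 0 and h'(r) ≠ 0 on I, satisfying the third-order ODE h³(h')³h''' − h³ h' h''' − 2h³(h')²(h'')² + 3h²(h')⁴h'' − 6h(h')² + h³(h'')² − 3h² h'' + 12h(h')⁴ − 6h(h')⁶ + (λ/4)h⁴(h')²h'' − (λ/4)h⁴h'' = 0 on I, together with |h'(r)| ≤ 1 on I. Define u : I → ℝ with u ≥ 0 by u(r) = √(1 − h'(r)²), and suppose u(r) ≠ 0 on I. Define s : I → ℝ by s = (3h²h' + h³h''/h' − 3h²/h' − λh⁴/(4h'))/h³. Then on I the pair (h, u, s) satisfies: u² = 1 − (h')², (h³ u)'' − 12 h u − λ h³ u − (s h³ u)' = 0, and (h³ h')' − 3h² − (λ/4)h⁴ − s h³ h' = 0. -/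
/-!
Write `p = h'`. Since `u = √(1 - p²)` does not vanish, `1 - p² > 0` and `u` has logarithmic
derivative `-p h'' / (1 - p²)`. With `C = (3h² + λh⁴/4 - h³h''/(1 - p²)) / p` one finds
`(h³u)' - s h³u = u C`, so the second-order equation says `(u C)' = (12h + λh³) u`, and
`(u C)' - (12h + λh³) u` is `u / (p²(1 - p²)²)` times the left-hand side of the soliton ODE.
The first-order equation is an algebraic consequence of the formula for `s`.
-/

open Filter

noncomputable def solitonOde (lam : ℝ) (h : ℝ → ℝ) (r : ℝ) : ℝ :=
  (h r) ^ 3 * (deriv h r) ^ 3 * deriv (deriv (deriv h)) r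
    - (h r) ^ 3 * deriv h r * deriv (deriv (deriv h)) r
    - 2 * (h r) ^ 3 * (deriv h r) ^ 2 * (deriv (deriv h) r) ^ 2
    + 3 * (h r) ^ 2 * (deriv h r) ^ 4 * deriv (deriv h) r
    - 6 * h r * (deriv h r) ^ 2
    + (h r) ^ 3 * (deriv (deriv h) r) ^ 2
    - 3 * (h r) ^ 2 * deriv (deriv h) r
    + 12 * h r * (deriv h r) ^ 4
    - 6 * h r * (deriv h r) ^ 6
    + (lam / 4) * (h r) ^ 4 * (deriv h r) ^ 2 * deriv (deriv h) r
    - (lam / 4) * (h r) ^ 4 * deriv (deriv h) r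

noncomputable def solitonS (lam : ℝ) (h : ℝ → ℝ) (x : ℝ) : ℝ :=
  (3 * (h x) ^ 2 * deriv h x
    + (h x) ^ 3 * deriv (deriv h) x / deriv h x
    - 3 * (h x) ^ 2 / deriv h x
    - lam * (h x) ^ 4 / (4 * deriv h x)) / (h x) ^ 3

noncomputable def solitonFlux (lam : ℝ) (h : ℝ → ℝ) (x : ℝ) : ℝ :=
  (3 * h x ^ 2 + lam / 4 * h x ^ 4
    - h x ^ 3 * deriv (deriv h) x / (1 - deriv h x ^ 2)) / deriv h x

theorem HasDerivAt.sqrt_one_sub_sq {f : ℝ → ℝ} {f' x : ℝ} (hf : HasDerivAt f f' x)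
    (hx : 0 < 1 - f x ^ 2) :
    HasDerivAt (fun y => √(1 - f y ^ 2)) (-(f x * f') / (1 - f x ^ 2) * √(1 - f x ^ 2)) x := by
  refine (((hf.pow 2).const_sub 1).sqrt hx.ne').congr_deriv ?_
  have hs : √(1 - f x ^ 2) ≠ 0 := Real.sqrt_ne_zero'.mpr hx
  simp only [Pi.pow_apply]
  field_simp
  rw [Real.sq_sqrt hx.le]
  ring

theorem hasDerivAt_of_eqOn_sqrt_one_sub_sq {I : Set ℝ} (hI : IsOpen I) {f u : ℝ → ℝ}
    {f' x : ℝ} (hx : x ∈ I) (hu : ∀ y ∈ I, u y = √(1 - f y ^ 2)) (hux : u x ≠ 0)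
    (hf : HasDerivAt f f' x) :
    HasDerivAt u (-(f x * f') / (1 - f x ^ 2) * u x) x := by
  have hD : 0 < 1 - f x ^ 2 := Real.sqrt_ne_zero'.mp (hu x hx ▸ hux)
  rw [hu x hx]
  exact (hf.sqrt_one_sub_sq hD).congr_of_eventuallyEq (eventuallyEq_of_mem (hI.mem_nhds hx) hu)

theorem HasDerivAt.pow_three_mul {h u : ℝ → ℝ} {h' w x : ℝ} (hh : HasDerivAt h h' x)
    (hu : HasDerivAt u (w * u x) x) :
    HasDerivAt (fun y => h y ^ 3 * u y) ((3 * h x ^ 2 * h' + w * h x ^ 3) * u x) x :=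
  ((hh.pow 3).mul hu).congr_deriv (by simp only [Pi.pow_apply]; push_cast; ring)

theorem differentiableAt_deriv_pow_three_mul {I : Set ℝ} (hI : IsOpen I) {h u : ℝ → ℝ} {r : ℝ}
    (hr : r ∈ I) (hh1 : ∀ x ∈ I, DifferentiableAt ℝ h x)
    (hh2 : DifferentiableAt ℝ (deriv h) r) (hh3 : DifferentiableAt ℝ (deriv (deriv h)) r)
    (hu : ∀ x ∈ I, HasDerivAt u
      (-(deriv h x * deriv (deriv h) x) / (1 - deriv h x ^ 2) * u x) x)
    (hD : 1 - deriv h r ^ 2 ≠ 0) :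
    DifferentiableAt ℝ (deriv fun y => h y ^ 3 * u y) r := by
  refine ((eventuallyEq_of_mem (hI.mem_nhds hr) fun x hx =>
    ((hh1 x hx).hasDerivAt.pow_three_mul (hu x hx)).deriv).differentiableAt_iff).mpr ?_
  have := hh1 r hr
  have := (hu r hr).differentiableAt
  fun_prop (disch := assumption)

theorem solitonFlux_eq (lam : ℝ) {h : ℝ → ℝ} {x : ℝ} (hp : deriv h x ≠ 0)
    (hD : 1 - deriv h x ^ 2 ≠ 0) :
    solitonFlux lam h x = 3 * h x ^ 2 * deriv h x
      - deriv h x * deriv (deriv h) x / (1 - deriv h x ^ 2) * h x ^ 3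
      - solitonS lam h x * h x ^ 3 := by
  unfold solitonFlux solitonS
  field_simp
  ring

theorem hasDerivAt_mul_solitonFlux (lam : ℝ) {h u : ℝ → ℝ} {r : ℝ}
    (hh1 : DifferentiableAt ℝ h r) (hh2 : DifferentiableAt ℝ (deriv h) r)
    (hh3 : DifferentiableAt ℝ (deriv (deriv h)) r)
    (hu : HasDerivAt u (-(deriv h r * deriv (deriv h) r) / (1 - deriv h r ^ 2) * u r) r)
    (hp : deriv h r ≠ 0) (hD : 1 - deriv h r ^ 2 ≠ 0) (hode : solitonOde lam h r = 0) :
    HasDerivAt (fun x => u x * solitonFlux lam h x) (u r * (12 * h r + lam * h r ^ 3)) r := by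
  have hH := hh1.hasDerivAt
  have hP := hh2.hasDerivAt
  have hQ := hh3.hasDerivAt
  have hC : HasDerivAt (solitonFlux lam h) _ r :=
    ((((hH.pow 2).const_mul 3).add ((hH.pow 4).const_mul (lam / 4))).sub
      (((hH.pow 3).mul hQ).div ((hP.pow 2).const_sub 1) hD)).div hP hp
  refine (hu.mul hC).congr_deriv ?_
  unfold solitonOde at hode
  unfold solitonFlux
  simp only [Pi.pow_apply, Pi.add_apply, Pi.sub_apply, Pi.mul_apply, Pi.div_apply]
  linear_combination (norm := (field_simp; ring))
    u r / (deriv h r ^ 2 * (1 - deriv h r ^ 2) ^ 2) * hode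

theorem deriv_pow_three_mul_deriv (lam : ℝ) {h : ℝ → ℝ} {r : ℝ}
    (hh1 : DifferentiableAt ℝ h r) (hh2 : DifferentiableAt ℝ (deriv h) r) (hp : deriv h r ≠ 0) :
    deriv (fun x => h x ^ 3 * deriv h x) r
      = 3 * h r ^ 2 + lam / 4 * h r ^ 4 + solitonS lam h r * h r ^ 3 * deriv h r := by
  have hd : HasDerivAt (fun x => h x ^ 3 * deriv h x) _ r :=
    (hh1.hasDerivAt.pow 3).mul hh2.hasDerivAt
  rw [hd.deriv, solitonS]
  simp only [Pi.pow_apply]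
  field_simp
  ring

theorem nk_soliton_ode_converse_general
    (a b lam : ℝ) (h u s : ℝ → ℝ)
    (I : Set ℝ) (hI : I = Set.Ioo a b)
    (hh1 : ∀ r ∈ I, DifferentiableAt ℝ h r)
    (hh2 : ∀ r ∈ I, DifferentiableAt ℝ (deriv h) r)
    (hh3 : ∀ r ∈ I, DifferentiableAt ℝ (deriv (deriv h)) r)
    (hne : ∀ r ∈ I, deriv h r ≠ 0)
    (hODE : ∀ r ∈ I,
      (h r) ^ 3 * (deriv h r) ^ 3 * deriv (deriv (deriv h)) r
        - (h r) ^ 3 * deriv h r * deriv (deriv (deriv h)) r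
        - 2 * (h r) ^ 3 * (deriv h r) ^ 2 * (deriv (deriv h) r) ^ 2
        + 3 * (h r) ^ 2 * (deriv h r) ^ 4 * deriv (deriv h) r
        - 6 * h r * (deriv h r) ^ 2
        + (h r) ^ 3 * (deriv (deriv h) r) ^ 2
        - 3 * (h r) ^ 2 * deriv (deriv h) r
        + 12 * h r * (deriv h r) ^ 4
        - 6 * h r * (deriv h r) ^ 6
        + (lam / 4) * (h r) ^ 4 * (deriv h r) ^ 2 * deriv (deriv h) r
        - (lam / 4) * (h r) ^ 4 * deriv (deriv h) r = 0)
    (hu : ∀ r ∈ I, u r = Real.sqrt (1 - (deriv h r) ^ 2))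
    (hu0 : ∀ r ∈ I, u r ≠ 0)
    (hs : ∀ r ∈ I,
      s r = (3 * (h r) ^ 2 * deriv h r
              + (h r) ^ 3 * deriv (deriv h) r / deriv h r
              - 3 * (h r) ^ 2 / deriv h r
              - lam * (h r) ^ 4 / (4 * deriv h r)) / (h r) ^ 3) :
    (∀ r ∈ I, (u r) ^ 2 = 1 - (deriv h r) ^ 2) ∧
    (∀ r ∈ I,
      deriv (deriv (fun x => (h x) ^ 3 * u x)) r
        - 12 * h r * u r - lam * (h r) ^ 3 * u r
        - deriv (fun x => s x * (h x) ^ 3 * u x) r = 0) ∧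
    (∀ r ∈ I,
      deriv (fun x => (h x) ^ 3 * deriv h x) r
        - 3 * (h r) ^ 2 - (lam / 4) * (h r) ^ 4
        - s r * (h r) ^ 3 * deriv h r = 0) := by
  have hIo : IsOpen I := hI ▸ isOpen_Ioo
  have hD : ∀ x ∈ I, 0 < 1 - deriv h x ^ 2 :=
    fun x hx => Real.sqrt_ne_zero'.mp (hu x hx ▸ hu0 x hx)
  have hu' : ∀ x ∈ I, HasDerivAt u
      (-(deriv h x * deriv (deriv h) x) / (1 - deriv h x ^ 2) * u x) x :=
    fun x hx => hasDerivAt_of_eqOn_sqrt_one_sub_sq hIo hx hu (hu0 x hx) (hh2 x hx).hasDerivAt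
  refine ⟨fun r hr => ?_, fun r hr => ?_, fun r hr => ?_⟩
  · rw [hu r hr, Real.sq_sqrt (hD r hr).le]
  · have hF : ∀ x ∈ I, HasDerivAt (fun y => h y ^ 3 * u y) _ x :=
      fun x hx => (hh1 x hx).hasDerivAt.pow_three_mul (hu' x hx)
    have hF' := differentiableAt_deriv_pow_three_mul hIo hr hh1 (hh2 r hr) (hh3 r hr) hu'
      (hD r hr).ne'
    have hsF : (fun x => s x * h x ^ 3 * u x) =ᶠ[nhds r]
        fun x => deriv (fun y => h y ^ 3 * u y) x - u x * solitonFlux lam h x := by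
      refine eventuallyEq_of_mem (hIo.mem_nhds hr) fun x hx => ?_
      have hsx : s x = solitonS lam h x := hs x hx
      rw [(hF x hx).deriv, solitonFlux_eq lam (hne x hx) (hD x hx).ne', hsx]
      ring
    have hC := hasDerivAt_mul_solitonFlux lam (hh1 r hr) (hh2 r hr) (hh3 r hr) (hu' r hr)
      (hne r hr) (hD r hr).ne' (hODE r hr)
    rw [hsF.deriv_eq, deriv_fun_sub hF' hC.differentiableAt, hC.deriv]
    ring
  · rw [hs r hr, deriv_pow_three_mul_deriv lam (hh1 r hr) (hh2 r hr) (hne r hr), solitonS]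
    ring

/-- Converse of the reduction: a positive solution `h` of the third-order
soliton ODE with `0 < |h'| ≤ 1` algebraically determines `u = sin 3θ` (via
`u = √(1 - (h')²)`, the nonnegative branch, assumed nonvanishing) and
`k' = s`, which then satisfy the nearly Kähler soliton system with
`cos 3θ = h'`. -/
theorem nk_soliton_ode_converse
    (a b lam : ℝ) (h u s : ℝ → ℝ)
    (I : Set ℝ) (hI : I = Set.Ioo a b)
    (hpos : ∀ r ∈ I, 0 < h r)
    (hh1 : ∀ r ∈ I, DifferentiableAt ℝ h r)
    (hh2 : ∀ r ∈ I, DifferentiableAt ℝ (deriv h) r)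
    (hh3 : ∀ r ∈ I, DifferentiableAt ℝ (deriv (deriv h)) r)
    (hne : ∀ r ∈ I, deriv h r ≠ 0)
    (hbd : ∀ r ∈ I, |deriv h r| ≤ 1)
    (hODE : ∀ r ∈ I,
      (h r) ^ 3 * (deriv h r) ^ 3 * deriv (deriv (deriv h)) r
        - (h r) ^ 3 * deriv h r * deriv (deriv (deriv h)) r
        - 2 * (h r) ^ 3 * (deriv h r) ^ 2 * (deriv (deriv h) r) ^ 2
        + 3 * (h r) ^ 2 * (deriv h r) ^ 4 * deriv (deriv h) r
        - 6 * h r * (deriv h r) ^ 2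
        + (h r) ^ 3 * (deriv (deriv h) r) ^ 2
        - 3 * (h r) ^ 2 * deriv (deriv h) r
        + 12 * h r * (deriv h r) ^ 4
        - 6 * h r * (deriv h r) ^ 6
        + (lam / 4) * (h r) ^ 4 * (deriv h r) ^ 2 * deriv (deriv h) r
        - (lam / 4) * (h r) ^ 4 * deriv (deriv h) r = 0)
    (hu : ∀ r ∈ I, u r = Real.sqrt (1 - (deriv h r) ^ 2))
    (hu0 : ∀ r ∈ I, u r ≠ 0)
    (hs : ∀ r ∈ I,
      s r = (3 * (h r) ^ 2 * deriv h r
              + (h r) ^ 3 * deriv (deriv h) r / deriv h r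
              - 3 * (h r) ^ 2 / deriv h r
              - lam * (h r) ^ 4 / (4 * deriv h r)) / (h r) ^ 3) :
    (∀ r ∈ I, (u r) ^ 2 = 1 - (deriv h r) ^ 2) ∧
    (∀ r ∈ I,
      deriv (deriv (fun x => (h x) ^ 3 * u x)) r
        - 12 * h r * u r - lam * (h r) ^ 3 * u r
        - deriv (fun x => s x * (h x) ^ 3 * u x) r = 0) ∧
    (∀ r ∈ I,
      deriv (fun x => (h x) ^ 3 * deriv h x) r
        - 3 * (h r) ^ 2 - (lam / 4) * (h r) ^ 4
        - s r * (h r) ^ 3 * deriv h r = 0) :=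
  nk_soliton_ode_converse_general a b lam h u s I hI hh1 hh2 hh3 hne hODE hu hu0 hs
end
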